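/- Deterministic version of the posterior limit: let S ⊂ ℝⁿ be compact with positive volume, φ = log Z convex, continuous on S, and differentiable at an interior point t'. Define g_N(t) = exp(N[⟨t, m⟩ - φ(t)]) / ∫_S exp(N[⟨s, m⟩ - φ(s)]) ds with m = ∇φ(t'). Then for every t ∈ S, g_N(t)^{1/N} → exp(-D_φ(t, t')) as N → ∞, where D_φ(t, t') = φ(t) - φ(t') - ⟨∇φ(t'), t - t'⟩. -/

import Mathlib

/-!
Convexity puts the tangent plane of `φ` at `t'` below `φ` on `S`, so `h s = ⟪s, m⟫ - φ s`
attains its maximum over `S` at the interior point `t'`. By Laplace's principle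
`(1/N) log ∫_S exp (N h) → h t'`: the integral is at most `vol S · exp (N h t')`, and at least
`vol U · exp (N (h t' - ε))` on a neighbourhood `U` of `t'` where `h > h t' - ε`. Hence
`g_N(t)^{1/N} = exp (h t - (1/N) log ∫_S exp (N h)) → exp (h t - h t') = exp (-D_φ(t, t'))`.
-/

open MeasureTheory Real Filter Set
open scoped RealInnerProductSpace Topology

theorem ConvexOn.le_sub_of_hasFDerivAt {E : Type*} [NormedAddCommGroup E] [NormedSpace ℝ E]
    {s : Set E} {f : E → ℝ} {f' : E →L[ℝ] ℝ} {x y : E}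
    (hf : ConvexOn ℝ s f) (hx : x ∈ s) (hy : y ∈ s) (hf' : HasFDerivAt f f' x) :
    f' (y - x) ≤ f y - f x := by
  have hline :
      ConvexOn ℝ (AffineMap.lineMap (k := ℝ) x y ⁻¹' s) (f ∘ AffineMap.lineMap x y) :=
    hf.comp_affineMap _
  have hderiv : HasDerivAt (f ∘ AffineMap.lineMap (k := ℝ) x y) (f' (y - x)) 0 := by
    refine HasFDerivAt.comp_hasDerivAt (l := f) (0 : ℝ) ?_ AffineMap.hasDerivAt_lineMap
    simpa using hf'
  simpa [slope_def_field] using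
    hline.le_slope_of_hasDerivAt (x := 0) (y := 1) (by simpa using hx) (by simpa using hy)
      zero_lt_one hderiv

theorem ConvexOn.inner_le_sub_of_hasGradientAt {E : Type*} [NormedAddCommGroup E]
    [InnerProductSpace ℝ E] [CompleteSpace E] {s : Set E} {f : E → ℝ} {m x y : E}
    (hf : ConvexOn ℝ s f) (hx : x ∈ s) (hy : y ∈ s) (hm : HasGradientAt f m x) :
    ⟪m, y - x⟫ ≤ f y - f x :=
  hf.le_sub_of_hasFDerivAt hx hy hm.hasFDerivAt

theorem ConvexOn.isMaxOn_inner_sub_of_hasGradientAt {E : Type*} [NormedAddCommGroup E]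
    [InnerProductSpace ℝ E] [CompleteSpace E] {s : Set E} {f : E → ℝ} {m x : E}
    (hf : ConvexOn ℝ s f) (hx : x ∈ s) (hm : HasGradientAt f m x) :
    IsMaxOn (fun y => ⟪y, m⟫ - f y) s x := fun y hy => by
  have hgrad := hf.inner_le_sub_of_hasGradientAt hx hy hm
  show ⟪y, m⟫ - f y ≤ ⟪x, m⟫ - f x
  rw [inner_sub_right] at hgrad
  rw [real_inner_comm m y, real_inner_comm m x]
  linarith

theorem tendsto_log_mul_exp_div_atTop {c : ℝ} (hc : 0 < c) (a : ℝ) :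
    Tendsto (fun N : ℕ => log (c * exp (N * a)) / N) atTop (𝓝 a) := by
  have h := (tendsto_const_div_atTop_nhds_zero_nat (log c)).add_const a
  rw [zero_add] at h
  refine h.congr' ?_
  filter_upwards [eventually_ne_atTop 0] with N hN
  rw [log_mul hc.ne' (exp_pos _).ne', log_exp]
  field_simp

theorem tendsto_log_div_atTop_of_exp_bounds {u : ℕ → ℝ} {a C : ℝ}
    (hlow : ∀ ε > 0, ∃ c > 0, ∀ N : ℕ, c * exp (N * (a - ε)) ≤ u N)
    (hup : ∀ N : ℕ, u N ≤ C * exp (N * a)) :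
    Tendsto (fun N : ℕ => log (u N) / N) atTop (𝓝 a) := by
  have log_div_mono {v w : ℝ} (hv : 0 < v) (hvw : v ≤ w) (N : ℕ) : log v / N ≤ log w / N :=
    div_le_div_of_nonneg_right (log_le_log hv hvw) N.cast_nonneg
  obtain ⟨c₁, hc₁, hlow₁⟩ := hlow 1 one_pos
  have hu : ∀ N, 0 < u N := fun N => (by positivity : 0 < c₁ * _).trans_le (hlow₁ N)
  have hC : 0 < C := by simpa using (hu 0).trans_le (hup 0)
  refine tendsto_order.2 ⟨fun b hb => ?_, fun b hb => ?_⟩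
  · obtain ⟨c, hc, hlowc⟩ := hlow ((a - b) / 2) (by linarith)
    filter_upwards [(tendsto_log_mul_exp_div_atTop hc _).eventually
      (eventually_gt_nhds (by linarith : b < a - (a - b) / 2))] with N hN
    exact hN.trans_le (log_div_mono (by positivity) (hlowc N) N)
  · filter_upwards [(tendsto_log_mul_exp_div_atTop hC a).eventually (eventually_lt_nhds hb)]
      with N hN
    exact (log_div_mono (hu N) (hup N) N).trans_lt hN

theorem tendsto_exp_mul_div_rpow_inv {u : ℕ → ℝ} {L : ℝ} (hu : ∀ N, 0 < u N)
    (hL : Tendsto (fun N : ℕ => log (u N) / N) atTop (𝓝 L)) (a : ℝ) :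
    Tendsto (fun N : ℕ => (exp (N * a) / u N) ^ (N : ℝ)⁻¹) atTop (𝓝 (exp (a - L))) := by
  refine ((continuous_exp.tendsto _).comp (hL.const_sub a)).congr' ?_
  filter_upwards [eventually_ne_atTop 0] with N hN
  rw [Function.comp_apply, rpow_def_of_pos (div_pos (exp_pos _) (hu N)),
    log_div (exp_pos _).ne' (hu N).ne', log_exp]
  field_simp

section Laplace

variable {X : Type*} [MeasurableSpace X] {μ : Measure X} {S : Set X} {h : X → ℝ} {x₀ : X}

theorem setIntegral_exp_mul_le_of_isMaxOn (hS : μ S < ⊤) (hmax : IsMaxOn h S x₀) (N : ℕ) :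
    ∫ s in S, exp (N * h s) ∂μ ≤ μ.real S * exp (N * h x₀) := by
  rw [mul_comm]
  refine (le_norm_self _).trans (norm_setIntegral_le_of_norm_le_const hS fun s hs => ?_)
  rw [Real.norm_eq_abs, abs_exp, exp_le_exp]
  exact mul_le_mul_of_nonneg_left (hmax hs) N.cast_nonneg

variable [TopologicalSpace X] [T2Space X] [OpensMeasurableSpace X] [IsFiniteMeasureOnCompacts μ]

theorem exists_pos_mul_exp_le_setIntegral_exp [μ.IsOpenPosMeasure] (hS : IsCompact S)
    (hh : ContinuousOn h S) (hx₀ : x₀ ∈ interior S) {ε : ℝ} (hε : 0 < ε) :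
    ∃ c > 0, ∀ N : ℕ, c * exp (N * (h x₀ - ε)) ≤ ∫ s in S, exp (N * h s) ∂μ := by
  set U := interior ({x | h x₀ - ε < h x} ∩ S)
  have hU : U ⊆ S := interior_subset.trans inter_subset_right
  have hx₀U : x₀ ∈ U := by
    have hcont : ContinuousAt h x₀ := hh.continuousAt (mem_interior_iff_mem_nhds.1 hx₀)
    exact mem_interior_iff_mem_nhds.2 <| inter_mem
      (hcont.eventually (eventually_gt_nhds (by linarith)))
      (mem_interior_iff_mem_nhds.1 hx₀)
  have hUfin : μ U < ⊤ := (measure_mono hU).trans_lt hS.measure_lt_top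
  refine ⟨μ.real U, ENNReal.toReal_pos (isOpen_interior.measure_ne_zero μ ⟨x₀, hx₀U⟩)
    hUfin.ne, fun N => ?_⟩
  have hint : IntegrableOn (fun s => exp (N * h s)) S μ :=
    (continuous_exp.comp_continuousOn (continuousOn_const.mul hh)).integrableOn_compact hS
  calc μ.real U * exp (N * (h x₀ - ε)) = ∫ _ in U, exp (N * (h x₀ - ε)) ∂μ := by
        rw [setIntegral_const, smul_eq_mul]
    _ ≤ ∫ s in U, exp (N * h s) ∂μ := by
        refine setIntegral_mono_on (integrableOn_const hUfin.ne) (hint.mono_set hU)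
          isOpen_interior.measurableSet fun s hs => ?_
        exact exp_le_exp.2 <| mul_le_mul_of_nonneg_left
          (interior_subset hs).1.le N.cast_nonneg
    _ ≤ ∫ s in S, exp (N * h s) ∂μ :=
        setIntegral_mono_set hint (.of_forall fun _ => (exp_pos _).le) hU.eventuallyLE

theorem tendsto_log_setIntegral_exp_mul_div_of_isMaxOn [μ.IsOpenPosMeasure] (hS : IsCompact S)
    (hh : ContinuousOn h S) (hx₀ : x₀ ∈ interior S) (hmax : IsMaxOn h S x₀) :
    Tendsto (fun N : ℕ => log (∫ s in S, exp (N * h s) ∂μ) / N) atTop (𝓝 (h x₀)) :=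
  tendsto_log_div_atTop_of_exp_bounds
    (fun _ hε => exists_pos_mul_exp_le_setIntegral_exp hS hh hx₀ hε)
    (setIntegral_exp_mul_le_of_isMaxOn hS.measure_lt_top hmax)

end Laplace

theorem posterior_limit_deterministic_general {n : ℕ}
    (S : Set (EuclideanSpace ℝ (Fin n)))
    (hS : IsCompact S)
    (φ : EuclideanSpace ℝ (Fin n) → ℝ)
    (hconv : ConvexOn ℝ S φ) (hcont : ContinuousOn φ S)
    (t' : EuclideanSpace ℝ (Fin n)) (ht' : t' ∈ interior S)
    (m : EuclideanSpace ℝ (Fin n)) (hm : HasGradientAt φ m t')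
    (gN : ℕ → EuclideanSpace ℝ (Fin n) → ℝ)
    (hgN : ∀ N t, gN N t =
      Real.exp ((N : ℝ) * (⟪t, m⟫ - φ t)) /
        ∫ s in S, Real.exp ((N : ℝ) * (⟪s, m⟫ - φ s))) :
    ∀ t ∈ S,
      Tendsto (fun N : ℕ => (gN N t) ^ ((N : ℝ)⁻¹)) atTop
        (nhds (Real.exp (-(φ t - φ t' - ⟪m, t - t'⟫)))) := by
  intro t _
  set f := fun s => ⟪s, m⟫ - φ s
  have hf : ContinuousOn f S := (continuous_id.inner continuous_const).continuousOn.sub hcont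
  have hmax : IsMaxOn f S t' := hconv.isMaxOn_inner_sub_of_hasGradientAt (interior_subset ht') hm
  obtain ⟨c, hc, hlow⟩ := exists_pos_mul_exp_le_setIntegral_exp (μ := volume) hS hf ht' one_pos
  have hpos (N : ℕ) : 0 < ∫ s in S, exp (N * f s) := (mul_pos hc (exp_pos _)).trans_le (hlow N)
  have hD : f t - f t' = -(φ t - φ t' - ⟪m, t - t'⟫) := by
    simp only [f, inner_sub_right, real_inner_comm m]
    ring
  simpa only [hgN, hD] using tendsto_exp_mul_div_rpow_inv hpos
    (tendsto_log_setIntegral_exp_mul_div_of_isMaxOn hS hf ht' hmax) (f t)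

/-- Deterministic version of the posterior limit: with `m = ∇φ(t')`, the `N`-th root of the
normalized density `g_N(t) = exp (N (⟪t, m⟫ - φ t)) / ∫_S exp (N (⟪s, m⟫ - φ s)) ds`
converges to `exp (-D_φ(t, t'))`. -/
theorem posterior_limit_deterministic {n : ℕ}
    (S : Set (EuclideanSpace ℝ (Fin n)))
    (hS : IsCompact S) (hScl : S = closure (interior S)) (hvol : 0 < volume S)
    (φ : EuclideanSpace ℝ (Fin n) → ℝ)
    (hconv : ConvexOn ℝ S φ) (hcont : ContinuousOn φ S)
    (t' : EuclideanSpace ℝ (Fin n)) (ht' : t' ∈ interior S)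
    (m : EuclideanSpace ℝ (Fin n)) (hm : HasGradientAt φ m t')
    (gN : ℕ → EuclideanSpace ℝ (Fin n) → ℝ)
    (hgN : ∀ N t, gN N t =
      Real.exp ((N : ℝ) * (⟪t, m⟫ - φ t)) /
        ∫ s in S, Real.exp ((N : ℝ) * (⟪s, m⟫ - φ s))) :
    ∀ t ∈ S,
      Tendsto (fun N : ℕ => (gN N t) ^ ((N : ℝ)⁻¹)) atTop
        (nhds (Real.exp (-(φ t - φ t' - ⟪m, t - t'⟫)))) :=
  posterior_limit_deterministic_general S hS φ hconv hcont t' ht' m hm gN hgN
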